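/- arXiv:1101.5375 — 3 statements merged into one kernel-verified Lean document; each statement's English description precedes it below -/
import Mathlib

section
/- Let f : ℝ^m → ℝ be analytic on a connected open domain D containing the origin, and let s ≥ 0 be an integer. If ∫₀¹ t^s f(tu) dt = c for a constant c, for all u in some open subset O ⊆ D containing the origin, then f(u) = (s+1)·c for all u ∈ D. -/
/-!
On a small ball around the origin, substituting `y = r t` turns the hypothesis into
`∫₀ʳ y^s f(y u) dy = c r^(s+1)` for `0 < r ≤ 1`; differentiating in `r` gives
`f(r u) = (s+1) c`. So `f` is constant near the origin, and by the identity theorem on the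
connected set `D` it is constant on all of `D`.
-/

open Set Filter Topology Metric

theorem ContinuousOn.eq_deriv_of_intervalIntegral_eventuallyEq {g F : ℝ → ℝ} {a b x : ℝ}
    (hg : ContinuousOn g (Icc a b)) (hx : x ∈ Ioo a b)
    (hF : (fun r => ∫ y in a..r, g y) =ᶠ[𝓝 x] F) : g x = deriv F x := by
  have hint : IntervalIntegrable g MeasureTheory.volume a x :=
    (hg.mono (uIcc_of_le hx.1.le ▸ Icc_subset_Icc_right hx.2.le)).intervalIntegrable
  have hmeas : StronglyMeasurableAtFilter g (𝓝 x) :=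
    (hg.mono Ioo_subset_Icc_self).stronglyMeasurableAtFilter isOpen_Ioo x hx
  rw [← hF.deriv_eq, intervalIntegral.deriv_integral_right hint hmeas
    (hg.continuousAt (Icc_mem_nhds hx.1 hx.2))]

section
variable {E : Type*} [NormedAddCommGroup E] [NormedSpace ℝ E]

theorem intervalIntegral_pow_mul_comp_smul_smul (f : E → ℝ) (s : ℕ) (u : E) (r : ℝ) :
    r ^ (s + 1) * ∫ t in (0 : ℝ)..1, t ^ s * f (t • r • u) =
      ∫ y in (0 : ℝ)..r, y ^ s * f (y • u) := by
  calc r ^ (s + 1) * ∫ t in (0 : ℝ)..1, t ^ s * f (t • r • u)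
      = r * ∫ t in (0 : ℝ)..1, (t * r) ^ s * f ((t * r) • u) := by
        simp only [← intervalIntegral.integral_const_mul, smul_smul, mul_pow, pow_succ]
        ring_nf
    _ = ∫ y in (0 : ℝ)..r, y ^ s * f (y • u) := by
        simpa using intervalIntegral.mul_integral_comp_mul_right (f := fun y => y ^ s * f (y • u))
          (a := 0) (b := 1) r

theorem eventuallyEq_const_of_intervalIntegral_pow_mul_eq {f : E → ℝ} {s : ℕ} {c ε : ℝ}
    (hε : 0 < ε) (hf : ContinuousOn f (ball 0 ε))
    (hint : ∀ u ∈ ball (0 : E) ε, ∫ t in (0 : ℝ)..1, t ^ s * f (t • u) = c) :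
    f =ᶠ[𝓝 0] fun _ => (s + 1 : ℝ) * c := by
  filter_upwards [ball_mem_nhds (0 : E) (half_pos hε)] with v hv
  have hu : (2 : ℝ) • v ∈ ball (0 : E) ε := by
    rw [mem_ball_zero_iff, norm_smul, Real.norm_ofNat]
    linarith [mem_ball_zero_iff.mp hv]
  have hsegment : ∀ r ∈ Icc (0 : ℝ) 1, r • (2 : ℝ) • v ∈ ball (0 : E) ε := fun r hr =>
    (convex_ball 0 ε).smul_mem_of_zero_mem (mem_ball_self hε) hu hr
  have hg : ContinuousOn (fun y : ℝ => y ^ s * f (y • (2 : ℝ) • v)) (Icc 0 1) :=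
    (continuousOn_pow s).mul (hf.comp (by fun_prop) hsegment)
  have hprimitive : (fun r => ∫ y in (0 : ℝ)..r, y ^ s * f (y • (2 : ℝ) • v)) =ᶠ[𝓝 (1 / 2)]
      fun r => c * r ^ (s + 1) := by
    filter_upwards [Ioo_mem_nhds (by norm_num : (0 : ℝ) < 1 / 2) (by norm_num : (1 / 2 : ℝ) < 1)]
      with r hr
    rw [← intervalIntegral_pow_mul_comp_smul_smul, hint _ (hsegment r (Ioo_subset_Icc_self hr)),
      mul_comm]
  have hderiv := hg.eq_deriv_of_intervalIntegral_eventuallyEq (by norm_num) hprimitive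
  rw [((hasDerivAt_pow (s + 1) _).const_mul c).deriv, smul_smul, one_div,
    inv_mul_cancel₀ two_ne_zero, one_smul, add_tsub_cancel_right, Nat.cast_succ] at hderiv
  have h2 : ((2 : ℝ)⁻¹) ^ s ≠ 0 := by positivity
  rw [← mul_left_inj' h2, mul_comm (f v), hderiv]
  ring

end

theorem stmt1_general {m : ℕ} (f : (Fin m → ℝ) → ℝ) (D O : Set (Fin m → ℝ))
    (hDconn : IsConnected D) (h0D : (0 : Fin m → ℝ) ∈ D)
    (hf : AnalyticOnNhd ℝ f D) (s : ℕ) (c : ℝ)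
    (hO : IsOpen O) (h0O : (0 : Fin m → ℝ) ∈ O) (hOD : O ⊆ D)
    (hint : ∀ u ∈ O, (∫ t in (0:ℝ)..1, t ^ s * f (t • u)) = c) :
    ∀ u ∈ D, f u = (s + 1 : ℝ) * c := by
  obtain ⟨ε, hε, hball⟩ := Metric.isOpen_iff.mp hO 0 h0O
  have hconst : f =ᶠ[𝓝 0] fun _ => (s + 1 : ℝ) * c :=
    eventuallyEq_const_of_intervalIntegral_pow_mul_eq hε
      (hf.continuousOn.mono (hball.trans hOD)) fun u hu => hint u (hball hu)
  exact hf.eqOn_of_preconnected_of_eventuallyEq analyticOnNhd_const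
    hDconn.isPreconnected h0D hconst

/-- Lemma 1, constant case: if `f : ℝ^m → ℝ` is analytic on a connected
open set `D` containing the origin and `∫₀¹ t^s f(tu) dt = c` for all `u` in an open
neighborhood `O ⊆ D` of the origin, then `f(u) = (s+1)c` for all `u ∈ D`. -/
theorem stmt1 {m : ℕ} (f : (Fin m → ℝ) → ℝ) (D O : Set (Fin m → ℝ))
    (hD : IsOpen D) (hDconn : IsConnected D) (h0D : (0 : Fin m → ℝ) ∈ D)
    (hf : AnalyticOnNhd ℝ f D) (s : ℕ) (c : ℝ)
    (hO : IsOpen O) (h0O : (0 : Fin m → ℝ) ∈ O) (hOD : O ⊆ D)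
    (hint : ∀ u ∈ O, (∫ t in (0:ℝ)..1, t ^ s * f (t • u)) = c) :
    ∀ u ∈ D, f u = (s + 1 : ℝ) * c :=
  stmt1_general f D O hDconn h0D hf s c hO h0O hOD hint
end

section
/- Let f : ℝ^m → ℝ be analytic on a connected open domain D containing the origin, and s ≥ 0 an integer. If ∫₀¹ t^s f(tu) dt = 0 for all u in an open neighborhood of the origin contained in D, then f is identically zero on D. -/
open Set Filter Topology Metric

/-! If `∫₀¹ t^s f(tu) dt` vanishes for all `u` in a ball around the origin, then the substitution
`τ = x t` shows that the primitive `x ↦ ∫₀^x τ^s f(τw) dτ` vanishes for all `x` near `1`, so its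
derivative `f(w)` at `x = 1` vanishes too. Hence `f` vanishes near the origin, and on all of `D` by
the identity theorem for analytic functions. -/

section

variable {E F : Type*} [NormedAddCommGroup F] [NormedSpace ℝ F]

theorem integral_pow_smul_comp_smul_eq [AddCommGroup E] [Module ℝ E]
    (f : E → F) (s : ℕ) (u : E) (x : ℝ) :
    ∫ τ in (0 : ℝ)..x, τ ^ s • f (τ • u) =
      x ^ (s + 1) • ∫ t in (0 : ℝ)..1, t ^ s • f (t • x • u) := by
  have hsub := intervalIntegral.smul_integral_comp_mul_left (a := 0) (b := 1)
    (fun τ => τ ^ s • f (τ • u)) x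
  rw [mul_zero, mul_one] at hsub
  rw [← hsub, ← intervalIntegral.integral_smul, ← intervalIntegral.integral_smul]
  refine intervalIntegral.integral_congr fun t _ => ?_
  rw [smul_smul, smul_smul, smul_smul, mul_comm t x]
  congr 1
  ring

theorem eq_zero_of_eventually_integral_eq_zero [CompleteSpace F] {g : ℝ → F} {V : Set ℝ}
    {a b : ℝ} (hV : IsOpen V) (hg : ContinuousOn g V) (hab : uIcc a b ⊆ V)
    (h : ∀ᶠ x in 𝓝 b, ∫ τ in a..x, g τ = 0) : g b = 0 := by
  have hbV : b ∈ V := hab right_mem_uIcc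
  have hderiv : HasDerivAt (fun x => ∫ τ in a..x, g τ) (g b) b :=
    intervalIntegral.integral_hasDerivAt_right ((hg.mono hab).intervalIntegrable)
      (hg.stronglyMeasurableAtFilter hV b hbV) (hg.continuousAt (hV.mem_nhds hbV))
  exact (hderiv.congr_of_eventuallyEq (h.mono fun _ hx => hx.symm)).unique (hasDerivAt_const b 0)

theorem eqOn_zero_of_integral_pow_smul_comp_smul_eq_zero [NormedAddCommGroup E] [NormedSpace ℝ E]
    [CompleteSpace F] {f : E → F} {ε : ℝ} (s : ℕ) (hf : ContinuousOn f (ball 0 ε))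
    (hint : ∀ u ∈ ball (0 : E) ε, ∫ t in (0 : ℝ)..1, t ^ s • f (t • u) = 0) :
    EqOn f 0 (ball 0 ε) := by
  intro w hw
  let V : Set ℝ := (· • w) ⁻¹' ball 0 ε
  have hV : IsOpen V := isOpen_ball.preimage (continuous_id.smul continuous_const)
  have hg : ContinuousOn (fun τ : ℝ => τ ^ s • f (τ • w)) V :=
    (continuousOn_id.pow s).smul (hf.comp (continuous_id.smul continuous_const).continuousOn
      fun _ hτ => hτ)
  have hsegment : uIcc 0 1 ⊆ V := by
    intro τ hτ
    rw [uIcc_of_le zero_le_one] at hτ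
    simp only [V, mem_preimage, mem_ball_zero_iff, norm_smul, Real.norm_of_nonneg hτ.1]
    exact (mul_le_of_le_one_left (norm_nonneg w) hτ.2).trans_lt (mem_ball_zero_iff.mp hw)
  have hprimitive : ∀ᶠ x in 𝓝 1, ∫ τ in (0 : ℝ)..x, τ ^ s • f (τ • w) = 0 := by
    filter_upwards [hV.mem_nhds (hsegment right_mem_uIcc)] with x hx
    rw [integral_pow_smul_comp_smul_eq, hint _ hx, smul_zero]
  simpa using eq_zero_of_eventually_integral_eq_zero hV hg hsegment hprimitive

end

theorem stmt2_general {m : ℕ} (f : (Fin m → ℝ) → ℝ) (D O : Set (Fin m → ℝ))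
    (hDconn : IsConnected D) (h0D : (0 : Fin m → ℝ) ∈ D)
    (hf : AnalyticOnNhd ℝ f D) (s : ℕ)
    (hO : IsOpen O) (h0O : (0 : Fin m → ℝ) ∈ O) (hOD : O ⊆ D)
    (hint : ∀ u ∈ O, (∫ t in (0:ℝ)..1, t ^ s * f (t • u)) = 0) :
    ∀ u ∈ D, f u = 0 := by
  obtain ⟨ε, hε, hball⟩ := Metric.isOpen_iff.1 hO 0 h0O
  have hball_zero : EqOn f 0 (ball 0 ε) :=
    eqOn_zero_of_integral_pow_smul_comp_smul_eq_zero s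
      (hf.continuousOn.mono (hball.trans hOD)) fun u hu => hint u (hball hu)
  have hnhds_zero : f =ᶠ[𝓝 0] 0 := eventually_of_mem (ball_mem_nhds 0 hε) hball_zero
  exact fun u hu => hf.eqOn_zero_of_preconnected_of_eventuallyEq_zero hDconn.isPreconnected h0D
    hnhds_zero hu

/-- Lemma 1, zero case: if `f : ℝ^m → ℝ` is analytic on a connected open
set `D` containing the origin and `∫₀¹ t^s f(tu) dt = 0` for all `u` in an open
neighborhood of the origin contained in `D`, then `f ≡ 0` on `D`. -/
theorem stmt2 {m : ℕ} (f : (Fin m → ℝ) → ℝ) (D O : Set (Fin m → ℝ))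
    (hD : IsOpen D) (hDconn : IsConnected D) (h0D : (0 : Fin m → ℝ) ∈ D)
    (hf : AnalyticOnNhd ℝ f D) (s : ℕ)
    (hO : IsOpen O) (h0O : (0 : Fin m → ℝ) ∈ O) (hOD : O ⊆ D)
    (hint : ∀ u ∈ O, (∫ t in (0:ℝ)..1, t ^ s * f (t • u)) = 0) :
    ∀ u ∈ D, f u = 0 :=
  stmt2_general f D O hDconn h0D hf s hO h0O hOD hint
end

section
/- Let F^μ_k : ℝ^m → ℝ (μ = 1,…,n; k = 1,…,m) be analytic on a ball B(0,R). Suppose there exist functions G^μ : B(0,R) → ℝ with ∫₀¹ F^μ_k(ty) dt = ∂G^μ/∂y^k on B(0,R) for all μ, k. Then there exist analytic functions G̃^μ on B(0,R) with F^μ_k(y) = ∂G̃^μ/∂y^k for all μ, k and all y ∈ B(0,R); explicitly, if G^μ = Σ_{l≥0} G^μ_l is the decomposition into homogeneous parts, then G̃^μ = Σ_{p≥0} (p+1) G^μ_{p+1} converges on B(0,R). -/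
/-!
Let `A y := ∫₀¹ Φ (t • y) dt` be the radial average of the covector field `Φ = ∑ₖ Fₖ dyᵏ`.
The hypothesis says `dG = A`; so wherever `G` is differentiable, in particular wherever `A ≠ 0`,
`A` is a closed form, `∂ⱼAₖ = ∂ₖAⱼ`. As `A` is analytic, the identity theorem spreads this
symmetry over the whole (connected) ball, the case `A ≡ 0` being trivial. Then `G̃ y := A y y` has
`dG̃ y = A y + DA y y = Φ y`, the last step being `d/ds (s • A (s • y)) = Φ (s • y)` at `s = 1`.
On homogeneous components, `A y y = ∑ₗ l Gₗ y` by Euler's identity, which is the formula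
`G̃ = ∑ₚ (p + 1) Gₚ₊₁`.

Analyticity of `y ↦ ∫ₐᵇ F (t • y) dt` comes from writing it as integration after the superposition
operator `u ↦ F ∘ u` on `C([a, b], E)`, evaluated at `t ↦ t • y`. That operator inherits a power
series from `F` as long as `u` stays in one ball of convergence of `F`; by compactness, `[0, 1]`
splits into finitely many intervals on which this holds.
-/

open Set Filter Topology MeasureTheory
open scoped NNReal ENNReal

noncomputable section

section General

variable {𝕜 E V W : Type*} [NontriviallyNormedField 𝕜]
  [NormedAddCommGroup E] [NormedSpace 𝕜 E] [NormedAddCommGroup V] [NormedSpace 𝕜 V]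
  [NormedAddCommGroup W] [NormedSpace 𝕜 W]

theorem AnalyticAt.clm_apply {A : E → W →L[𝕜] V} {u : E → W} {x : E}
    (hA : AnalyticAt 𝕜 A x) (hu : AnalyticAt 𝕜 u x) : AnalyticAt 𝕜 (fun y => A y (u y)) x := by
  have := ((ContinuousLinearMap.apply 𝕜 V).analyticAt_bilinear (u x, A x)).comp₂ hu hA
  exact this

theorem AnalyticAt.exists_hasFPowerSeriesOnBall_nnreal {F : E → V} {x : E} (h : AnalyticAt 𝕜 F x) :
    ∃ (p : FormalMultilinearSeries 𝕜 E V) (ρ : ℝ≥0), 0 < ρ ∧ HasFPowerSeriesOnBall F p x ρ := by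
  obtain ⟨p, r, hr⟩ := h
  obtain ⟨ρ, hρ, hρr⟩ := ENNReal.lt_iff_exists_nnreal_btwn.1 hr.r_pos
  exact ⟨p, ρ, ENNReal.coe_pos.1 hρ, hr.mono hρ hρr.le⟩

theorem ContinuousMap.eval_update {ι K X : Type*} [DecidableEq ι] [TopologicalSpace K]
    [TopologicalSpace X] (u : ι → C(K, X)) (j : ι) (z : C(K, X)) (t : K) :
    (fun i => Function.update u j z i t) = Function.update (fun i => u i t) j (z t) :=
  funext fun i => Function.apply_update (fun _ (g : C(K, X)) => g t) u j z i

namespace ContinuousMultilinearMap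

variable {ι : Type*} [Fintype ι] (K : Type*) [TopologicalSpace K] [CompactSpace K]

def compLeftContinuous (p : ContinuousMultilinearMap 𝕜 (fun _ : ι => E) V) :
    ContinuousMultilinearMap 𝕜 (fun _ : ι => C(K, E)) C(K, V) :=
  MultilinearMap.mkContinuous
    { toFun := fun u => ⟨fun t => p fun i => u i t, by fun_prop⟩
      map_update_add' := fun u j x y => by ext t; simp [ContinuousMap.eval_update]
      map_update_smul' := fun u j c x => by ext t; simp [ContinuousMap.eval_update] }
    ‖p‖ fun u => (ContinuousMap.norm_le _ (by positivity)).2 fun t =>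
      (p.le_opNorm _).trans <| by gcongr with i; exact (u i).norm_coe_le_norm t

variable {K}

theorem norm_compLeftContinuous_le (p : ContinuousMultilinearMap 𝕜 (fun _ : ι => E) V) :
    ‖p.compLeftContinuous K‖ ≤ ‖p‖ :=
  MultilinearMap.mkContinuous_norm_le _ (norm_nonneg p) _

end ContinuousMultilinearMap

open Classical in
/-- The superposition (Nemytskii) operator `u ↦ F ∘ u`, with junk value `0` when `F ∘ u` is not
continuous. -/
def nemytskii (K : Type*) [TopologicalSpace K] (F : E → V) (u : C(K, E)) : C(K, V) :=
  if h : Continuous (F ∘ u) then ⟨F ∘ u, h⟩ else 0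

theorem nemytskii_of_continuous {K : Type*} [TopologicalSpace K] {F : E → V} {u : C(K, E)}
    (h : Continuous (F ∘ u)) :
    nemytskii K F u = ⟨F ∘ u, h⟩ :=
  dif_pos h

theorem HasFPowerSeriesOnBall.nemytskii {K : Type*} [TopologicalSpace K] [CompactSpace K]
    [CompleteSpace V] {F : E → V}
    {p : FormalMultilinearSeries 𝕜 E V} {z : E} {r : ℝ≥0∞} (h : HasFPowerSeriesOnBall F p z r) :
    HasFPowerSeriesOnBall (nemytskii K F) (fun n => (p n).compLeftContinuous K)
      (ContinuousMap.const K z) r where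
  r_le := h.r_le.trans <| FormalMultilinearSeries.radius_le_of_le fun n =>
    (p n).norm_compLeftContinuous_le
  r_pos := h.r_pos
  hasSum {w} hw := by
    rw [Metric.mem_eball, edist_zero_right] at hw
    obtain ⟨s, hws, hsr⟩ := ENNReal.lt_iff_exists_nnreal_btwn.1 hw
    have hws' : ‖w‖ ≤ s := by exact_mod_cast hws.le
    have hsum : Summable fun n => (p n).compLeftContinuous K fun _ => w := by
      refine .of_norm_bounded (p.summable_norm_mul_pow (hsr.trans_le h.r_le)) fun n => ?_
      refine (((p n).compLeftContinuous K).le_opNorm _).trans ?_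
      simp only [Finset.prod_const, Finset.card_univ, Fintype.card_fin]
      gcongr
      exact (p n).norm_compLeftContinuous_le
    have hval (t : K) : (∑' n, (p n).compLeftContinuous K fun _ => w) t = F (z + w t) := by
      refine ((ContinuousMap.evalCLM 𝕜 t).hasSum hsum.hasSum).unique (h.hasSum ?_)
      rw [Metric.mem_eball, edist_zero_right]
      exact lt_of_le_of_lt (enorm_le_iff_norm_le.2 (w.norm_coe_le_norm t)) hw
    have hcont : Continuous (F ∘ (ContinuousMap.const K z + w)) :=
      (∑' n, (p n).compLeftContinuous K fun _ => w).continuous.congr hval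
    have hS : _root_.nemytskii K F (.const K z + w) =
        ∑' n, (p n).compLeftContinuous K fun _ => w := by
      rw [nemytskii_of_continuous hcont]
      ext t
      exact (hval t).symm
    exact hS ▸ hsum.hasSum

def ContinuousMap.smulConstCLM {K : Type*} [TopologicalSpace K] [CompactSpace K]
    (θ : C(K, 𝕜)) : E →L[𝕜] C(K, E) :=
  LinearMap.mkContinuous
    { toFun := fun x => ⟨fun t => θ t • x, by fun_prop⟩
      map_add' := fun x y => by ext t; simp
      map_smul' := fun c x => by ext t; simp [smul_comm c] }
    ‖θ‖ fun x => (ContinuousMap.norm_le _ (by positivity)).2 fun t => by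
      simpa [norm_smul] using mul_le_mul_of_nonneg_right (θ.norm_coe_le_norm t) (norm_nonneg x)

@[simp]
theorem ContinuousMap.smulConstCLM_apply {K : Type*} [TopologicalSpace K] [CompactSpace K]
    (θ : C(K, 𝕜)) (x : E) (t : K) : smulConstCLM θ x t = θ t • x :=
  rfl

end General

section Real

variable {E V : Type*} [NormedAddCommGroup E] [NormedSpace ℝ E] [NormedAddCommGroup V]
  [NormedSpace ℝ V]

def ContinuousMap.intervalIntegralCLM {a b : ℝ} (hab : a ≤ b) : C(Icc a b, V) →L[ℝ] V :=
  LinearMap.mkContinuous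
    { toFun := fun u => ∫ t in a..b, u (projIcc a b hab t)
      map_add' := fun u v => intervalIntegral.integral_add
        ((u.continuous.comp continuous_projIcc).intervalIntegrable _ _)
        ((v.continuous.comp continuous_projIcc).intervalIntegrable _ _)
      map_smul' := fun c u => intervalIntegral.integral_smul c _ }
    (b - a) fun u =>
      (intervalIntegral.norm_integral_le_of_norm_le_const fun t _ =>
        u.norm_coe_le_norm (projIcc a b hab t)).trans_eq <| by
          rw [abs_of_nonneg (sub_nonneg.2 hab), mul_comm]

theorem ContinuousMap.intervalIntegralCLM_apply {a b : ℝ} (hab : a ≤ b) (u : C(Icc a b, V)) :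
    intervalIntegralCLM hab u = ∫ t in a..b, u (projIcc a b hab t) :=
  rfl

def radialAverage (F : E → V) (y : E) : V :=
  ∫ t in (0 : ℝ)..1, F (t • y)

theorem radialAverage_apply {E' : Type*} [NormedAddCommGroup E'] [NormedSpace ℝ E']
    {F : E → E' →L[ℝ] V} {y : E} (hF : ContinuousOn (fun t : ℝ => F (t • y)) (Icc 0 1)) (v : E') :
    radialAverage F y v = radialAverage (fun x => F x v) y :=
  ContinuousLinearMap.intervalIntegral_apply (hF.intervalIntegrable_of_Icc zero_le_one) v

theorem StarConvex.isPreconnected {s : Set E} {x : E} (hs : StarConvex ℝ x s) :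
    IsPreconnected s := by
  rcases s.eq_empty_or_nonempty with rfl | hne
  · exact isPreconnected_empty
  · exact (hs.isPathConnected (hs.mem hne)).isConnected.isPreconnected

variable [CompleteSpace V]

theorem HasFPowerSeriesOnBall.analyticAt_intervalIntegral_smul {F : E → V}
    {p : FormalMultilinearSeries ℝ E V} {z : E} {ρ : ℝ≥0} (hF : HasFPowerSeriesOnBall F p z ρ)
    {a b : ℝ} (hab : a ≤ b) {y : E} (hy : ∀ t ∈ Icc a b, t • y ∈ Metric.ball z ρ) :
    AnalyticAt ℝ (fun x => ∫ t in a..b, F (t • x)) y := by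
  let L : E →L[ℝ] C(Icc a b, E) := ContinuousMap.smulConstCLM ⟨Subtype.val, by fun_prop⟩
  have hFc : ContinuousOn F (Metric.ball z ρ) := Metric.eball_coe (x := z) ▸ hF.continuousOn
  have hLy : L y ∈ Metric.ball (ContinuousMap.const _ z) ρ := by
    rw [Metric.mem_ball, dist_eq_norm, ContinuousMap.norm_lt_iff _ (by exact_mod_cast hF.r_pos)]
    exact fun t => by simpa [L, dist_eq_norm] using hy t t.2
  have hN : AnalyticAt ℝ (_root_.nemytskii _ F) (L y) :=
    (hF.nemytskii (K := Icc a b)).analyticAt_of_mem (by rwa [Metric.eball_coe])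
  refine (((ContinuousMap.intervalIntegralCLM hab).analyticAt _).comp
    (hN.comp (L.analyticAt y))).congr ?_
  filter_upwards [L.continuous.continuousAt.preimage_mem_nhds (Metric.isOpen_ball.mem_nhds hLy)]
    with x hx
  have hxt (t : Icc a b) : L x t ∈ Metric.ball z ρ :=
    lt_of_le_of_lt (ContinuousMap.dist_apply_le_dist t) hx
  simp only [Function.comp_apply, ContinuousMap.intervalIntegralCLM_apply,
    nemytskii_of_continuous (hFc.comp_continuous (L x).continuous hxt)]
  refine intervalIntegral.integral_congr fun t ht => ?_
  rw [uIcc_of_le hab] at ht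
  simp [L, projIcc_of_mem hab ht]

theorem analyticAt_intervalIntegral_smul {F : E → V} {a b : ℝ} (hab : a ≤ b) {y : E}
    (hF : ∀ t ∈ Icc a b, AnalyticAt ℝ F (t • y)) :
    AnalyticAt ℝ (fun x => ∫ t in a..b, F (t • x)) y := by
  choose p ρ hρ hp using fun τ : Icc a b => (hF τ τ.2).exists_hasFPowerSeriesOnBall_nnreal
  obtain ⟨s, hs0, hsmono, ⟨N, hsN⟩, hsub⟩ := exists_monotone_Icc_subset_open_cover_Icc hab
    (c := fun τ : Icc a b => {t : Icc a b | (t : ℝ) • y ∈ Metric.ball ((τ : ℝ) • y) (ρ τ)})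
    (fun τ => Metric.isOpen_ball.preimage (by fun_prop))
    (fun t _ => mem_iUnion.2 ⟨t, Metric.mem_ball_self (hρ t)⟩)
  have hpiece (n : ℕ) : Icc (s n : ℝ) (s (n + 1)) ⊆ Icc a b := fun t ht =>
    ⟨(s n).2.1.trans ht.1, ht.2.trans (s (n + 1)).2.2⟩
  have hsum :
      AnalyticAt ℝ (fun x => ∑ n ∈ Finset.range N, ∫ t in s n..s (n + 1), F (t • x)) y := by
    refine Finset.analyticAt_fun_sum _ fun n _ => ?_
    obtain ⟨τ, hτ⟩ := hsub n
    exact (hp τ).analyticAt_intervalIntegral_smul (hsmono n.le_succ)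
      fun t ht => hτ (a := ⟨t, hpiece n ht⟩) ht
  have hnear : ∀ᶠ x in 𝓝 y, ∀ t ∈ Icc a b, AnalyticAt ℝ F (t • x) :=
    isCompact_Icc.eventually_forall_of_forall_eventually (P := fun x t => AnalyticAt ℝ F (t • x))
      fun t ht =>
        ((by fun_prop : Continuous fun z : E × ℝ => z.2 • z.1).tendsto (y, t)).eventually
          ((isOpen_analyticAt ℝ F).eventually_mem (hF t ht))
  refine hsum.congr ?_
  filter_upwards [hnear] with x hx
  have hcont : ContinuousOn (fun t : ℝ => F (t • x)) (Icc a b) := fun t ht =>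
    (ContinuousAt.comp (f := fun s : ℝ => s • x) (hx t ht).continuousAt
      (by fun_prop)).continuousWithinAt
  have hint (n : ℕ) : IntervalIntegrable (fun t : ℝ => F (t • x)) volume (s n) (s (n + 1)) :=
    (hcont.mono <| (uIcc_of_le (Subtype.coe_le_coe.2 (hsmono n.le_succ))).trans_subset
      (hpiece n)).intervalIntegrable
  rw [intervalIntegral.sum_integral_adjacent_intervals fun n _ => hint n, hs0, hsN N le_rfl]

theorem AnalyticOnNhd.radialAverage {F : E → V} {s : Set E} (hs : StarConvex ℝ 0 s)
    (hF : AnalyticOnNhd ℝ F s) : AnalyticOnNhd ℝ (radialAverage F) s := fun _ hy =>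
  analyticAt_intervalIntegral_smul zero_le_one fun _ ht => hF _ (hs.smul_mem hy ht.1 ht.2)

theorem radialAverage_add_fderiv_apply_self {F : E → V} {y : E}
    (hF : ContinuousOn (fun t : ℝ => F (t • y)) (Icc 0 1))
    (hd : DifferentiableAt ℝ (radialAverage F) y) :
    radialAverage F y + fderiv ℝ (radialAverage F) y y = F y := by
  have hP : HasDerivAt (fun s : ℝ => s • radialAverage F (s • y))
      (radialAverage F y + fderiv ℝ (radialAverage F) y y) 1 := by
    have hcomp : HasDerivAt (fun s : ℝ => radialAverage F (s • y))
        (fderiv ℝ (radialAverage F) y y) 1 := by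
      have := HasFDerivAt.comp_hasDerivAt (l := radialAverage F) (1 : ℝ)
        (by simpa using hd.hasFDerivAt) ((hasDerivAt_id' (1 : ℝ)).smul_const y)
      rwa [one_smul] at this
    simpa [add_comm] using (hasDerivAt_id' (1 : ℝ)).fun_smul hcomp
  -- one-sided at `s = 1`: continuity of `F` is only assumed along `[0, 1] • y`
  have hQ : HasDerivWithinAt (fun s => ∫ u in (0 : ℝ)..s, F (u • y)) (F y) (Iic 1) 1 := by
    simpa using intervalIntegral.integral_hasDerivWithinAt_right
      (hF.intervalIntegrable_of_Icc zero_le_one)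
      ⟨Icc 0 1, Icc_mem_nhdsLE zero_lt_one, hF.aestronglyMeasurable measurableSet_Icc⟩
      ((hF 1 ⟨zero_le_one, le_rfl⟩).mono_of_mem_nhdsWithin (Icc_mem_nhdsLE zero_lt_one))
  have hPQ (s : ℝ) (hs : s ≠ 0) : s • radialAverage F (s • y) = ∫ u in (0 : ℝ)..s, F (u • y) := by
    have := intervalIntegral.integral_comp_mul_left (fun u => F (u • y)) hs (a := 0) (b := 1)
    simp only [mul_zero, mul_one] at this
    simp_rw [radialAverage, smul_smul, mul_comm _ s]
    rw [this, smul_inv_smul₀ hs]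
  refine (uniqueDiffWithinAt_Iic 1).eq_deriv _ hP.hasDerivWithinAt (hQ.congr_of_eventuallyEq ?_ ?_)
  · filter_upwards [Ioc_mem_nhdsLE zero_lt_one] with s hs using hPQ s hs.1.ne'
  · exact hPQ 1 one_ne_zero

theorem AnalyticOnNhd.fderiv_apply_comm_of_eqOn_fderiv {A : E → E →L[ℝ] V} {G : E → V}
    {s : Set E} (hA : AnalyticOnNhd ℝ A s) (hs : IsOpen s) (hs' : IsPreconnected s)
    (hG : EqOn (fderiv ℝ G) A s) {y : E} (hy : y ∈ s) (v w : E) :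
    fderiv ℝ A y v w = fderiv ℝ A y w v := by
  by_cases h : ∃ y₀ ∈ s, A y₀ ≠ 0
  · obtain ⟨y₀, hy₀, hAy₀⟩ := h
    have hD : AnalyticOnNhd ℝ (fun x => fderiv ℝ A x v w - fderiv ℝ A x w v) s := by
      intro x hx
      have happ (u u' : E) : AnalyticAt ℝ (fun x => fderiv ℝ A x u u') x :=
        ((hA.fderiv x hx).clm_apply analyticAt_const).clm_apply analyticAt_const
      exact (happ v w).fun_sub (happ w v)
    -- where `A ≠ 0`, `fderiv ℝ G = A` forces `G` to be differentiable
    have hU : ∀ᶠ x in 𝓝 y₀, HasFDerivAt G (A x) x := by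
      filter_upwards [hs.eventually_mem hy₀,
        (hA y₀ hy₀).continuousAt.eventually_ne hAy₀] with x hxs hx0
      have hdiff : DifferentiableAt ℝ G x := by
        by_contra hnd
        exact hx0 (hG hxs ▸ fderiv_zero_of_not_differentiableAt hnd)
      exact hG hxs ▸ hdiff.hasFDerivAt
    have hD0 : (fun x => fderiv ℝ A x v w - fderiv ℝ A x w v) =ᶠ[𝓝 y₀] 0 := by
      filter_upwards [hU.eventually_nhds, hs.eventually_mem hy₀] with x hx hxs
      exact sub_eq_zero.2 (second_derivative_symmetric_of_eventually hx
        (hA x hxs).differentiableAt.hasFDerivAt v w)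
    exact sub_eq_zero.1 (hD.eqOn_zero_of_preconnected_of_eventuallyEq_zero hs' hy₀ hD0 hy)
  · push Not at h
    have hA0 : A =ᶠ[𝓝 y] fun _ => 0 := by
      filter_upwards [hs.eventually_mem hy] with x hx using h x hx
    simp [hA0.fderiv_eq]

theorem hasFDerivAt_radialAverage_apply_self {F : E → E →L[ℝ] V} {G : E → V} {s : Set E}
    (hs : IsOpen s) (hs0 : StarConvex ℝ 0 s) (hF : AnalyticOnNhd ℝ F s)
    (hG : EqOn (fderiv ℝ G) (radialAverage F) s) {y : E} (hy : y ∈ s) :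
    HasFDerivAt (fun x => radialAverage F x x) (F y) y := by
  have hA := hF.radialAverage hs0
  have hFy : ContinuousOn (fun t : ℝ => F (t • y)) (Icc 0 1) :=
    hF.continuousOn.comp (by fun_prop) fun t ht => hs0.smul_mem hy ht.1 ht.2
  have heuler := radialAverage_add_fderiv_apply_self hFy (hA y hy).differentiableAt
  refine ((hA y hy).differentiableAt.hasFDerivAt.clm_apply (hasFDerivAt_id y)).congr_fderiv ?_
  ext v
  rw [← heuler]
  simp [hA.fderiv_apply_comm_of_eqOn_fderiv hs hs0.isPreconnected hG hy v y]

end Real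

end

/-- key step of Proposition 7, Godunov condition: if the analytic fluxes
`F^μ_k` on `B(0,R) ⊆ ℝ^m` admit potentials for their radial averages, i.e.
`∫₀¹ F^μ_k(ty) dt = ∂G^μ/∂y^k` on the ball, then there exist analytic functions `G̃^μ`
on `B(0,R)` with `F^μ_k = ∂G̃^μ/∂y^k` there (obtained by rescaling the homogeneous
components of `G^μ`, with the same radius of convergence). -/
theorem stmt13 {m n : ℕ} (R : ℝ) (hR : 0 < R)
    (F : Fin n → Fin m → (Fin m → ℝ) → ℝ)
    (hF : ∀ μ k, AnalyticOnNhd ℝ (F μ k) (Metric.ball 0 R))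
    (G : Fin n → (Fin m → ℝ) → ℝ)
    (hG : ∀ μ k, ∀ y ∈ Metric.ball (0 : Fin m → ℝ) R,
      (∫ t in (0:ℝ)..1, F μ k (t • y)) = fderiv ℝ (G μ) y (Pi.single k 1)) :
    ∃ Gt : Fin n → (Fin m → ℝ) → ℝ,
      (∀ μ, AnalyticOnNhd ℝ (Gt μ) (Metric.ball 0 R)) ∧
      ∀ μ k, ∀ y ∈ Metric.ball (0 : Fin m → ℝ) R,
        F μ k y = fderiv ℝ (Gt μ) y (Pi.single k 1) := by
  let Φ : Fin n → (Fin m → ℝ) → (Fin m → ℝ) →L[ℝ] ℝ :=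
    fun μ y => ∑ k, F μ k y • ContinuousLinearMap.proj k
  have hΦ_single (μ y k) : Φ μ y (Pi.single k 1) = F μ k y := by simp [Φ, Pi.single_apply]
  have hΦ (μ) : AnalyticOnNhd ℝ (Φ μ) (Metric.ball 0 R) := fun y hy =>
    Finset.analyticAt_fun_sum _ fun k _ => (hF μ k y hy).smul analyticAt_const
  have hstar : StarConvex ℝ 0 (Metric.ball (0 : Fin m → ℝ) R) :=
    (convex_ball 0 R).starConvex (Metric.mem_ball_self hR)
  have hGΦ (μ) : EqOn (fderiv ℝ (G μ)) (radialAverage (Φ μ)) (Metric.ball 0 R) := fun y hy =>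
    ContinuousLinearMap.coe_injective <| (Pi.basisFun ℝ (Fin m)).ext fun k => by
      have hcont : ContinuousOn (fun t : ℝ => Φ μ (t • y)) (Icc 0 1) :=
        (hΦ μ).continuousOn.comp (by fun_prop) fun t ht => hstar.smul_mem hy ht.1 ht.2
      simp only [Pi.basisFun_apply, ContinuousLinearMap.coe_coe]
      rw [← hG μ k y hy, radialAverage_apply hcont]
      simp only [hΦ_single, radialAverage]
  refine ⟨fun μ y => radialAverage (Φ μ) y y,
    fun μ y hy => ((hΦ μ).radialAverage hstar y hy).clm_apply analyticAt_id,
    fun μ k y hy => ?_⟩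
  rw [(hasFDerivAt_radialAverage_apply_self Metric.isOpen_ball hstar (hΦ μ) (hGΦ μ) hy).fderiv,
    hΦ_single]
end
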